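/- arXiv:0807.4188 — 4 statements merged into one kernel-verified Lean document; each statement's English description precedes it below -/
import Mathlib

section
/- Let A be an associative algebra over a field of characteristic zero, let U be a nilpotent element, and let ∂ be a derivation of A. Then (∂ exp(U))·exp(-U) = D(ad U)(∂U), where D(x) = (e^x - 1)/x and ad U denotes the commutator operator a ↦ Ua - aU, interpreted as the finite sum ∑_{n≥0} (ad U)^n/(n+1)! applied to ∂U. -/
/-!
Let `L`, `R` be left and right multiplication by `U`; they commute, are nilpotent, and
`ad U = L - R`. The Leibniz rule gives `∂(Uⁿ) = (∑_{k<n} Lᵏ R^{n-1-k}) ∂U`, so the theorem is an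
identity between polynomials in commuting `x = L`, `y = R`:
`e^{-y} (e^x - e^y)/(x - y) = (e^{x-y} - 1)/(x - y)`.
Multiplied by `x - y` it reads `e^{-y} e^x - 1 = e^{x-y} - 1`. Each homogeneous component is a
polynomial identity, so it may be proved in the domain `ℚ[X][Y]`, where `x - y` can be cancelled,
and then specialized; the nilpotency of `x` and `y` only truncates the sums.
-/

open Finset

open scoped Nat

theorem Finset.sum_range_sum_range_eq_sum_range_sum_antidiagonal {M : Type*} [AddCommMonoid M]
    {K : ℕ} (f : ℕ → ℕ → M) (hf : ∀ i j, K ≤ i + j → f i j = 0) :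
    ∑ i ∈ range K, ∑ j ∈ range K, f i j = ∑ s ∈ range K, ∑ p ∈ antidiagonal s, f p.1 p.2 := by
  simp_rw [Nat.sum_antidiagonal_eq_sum_range_succ f, sum_range_diag_flip]
  refine sum_congr rfl fun i _ => (sum_subset (range_subset_range.mpr (by omega)) ?_).symm
  intro j _ hj
  exact hf i j (by simp at hj; omega)

section Commute

variable {E : Type*} [Ring E] {x y : E}

theorem Commute.neg_pow_mul_geom_sum₂_eq_zero (h : Commute x y) {N n m : ℕ} (hx : x ^ N = 0)
    (hy : y ^ N = 0) (hnm : 2 * N ≤ n + m) :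
    (-y) ^ m * ∑ k ∈ range n, x ^ k * y ^ (n - 1 - k) = 0 := by
  rw [mul_sum]
  refine sum_eq_zero fun k hk => ?_
  by_cases hkN : N ≤ k
  · rw [pow_eq_zero_of_le hkN hx, zero_mul, mul_zero]
  · rw [mem_range] at hk
    rw [← mul_assoc, (h.symm.neg_left.pow_pow m k).eq, mul_assoc, neg_pow, mul_assoc, ← pow_add,
      pow_eq_zero_of_le (by omega) hy, mul_zero, mul_zero]

variable [Algebra ℚ E]

theorem Commute.sum_antidiagonal_inv_factorial_smul (h : Commute x y) (k : ℕ) :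
    ∑ p ∈ antidiagonal k, ((p.1 ! : ℚ)⁻¹ * (p.2 ! : ℚ)⁻¹) • (x ^ p.1 * y ^ p.2) =
      (k ! : ℚ)⁻¹ • (x + y) ^ k := by
  rw [h.add_pow', smul_sum]
  refine sum_congr rfl fun ⟨i, j⟩ hij => ?_
  rw [HasAntidiagonal.mem_antidiagonal] at hij
  subst hij
  have hchoose : ((i + j).choose i : ℚ) * i ! * j ! = (i + j)! := by
    rw [Nat.choose_symm_add]; exact_mod_cast Nat.add_choose_mul_factorial_mul_factorial i j
  rw [← Nat.cast_smul_eq_nsmul ℚ, smul_smul, ← hchoose]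
  have : ((i + j).choose i : ℚ) ≠ 0 := by exact_mod_cast (Nat.choose_pos (by omega)).ne'
  congr 1
  field_simp

/-- The degree-`d` homogeneous part of `e^{-y} (e^x - e^y) / (x - y)`. -/
def dexpComponent (d : ℕ) (x y : E) : E :=
  ∑ p ∈ antidiagonal (d + 1), ((p.1 ! : ℚ)⁻¹ * (p.2 ! : ℚ)⁻¹) •
    ((-y) ^ p.2 * ∑ k ∈ range p.1, x ^ k * y ^ (p.1 - 1 - k))

theorem Commute.dexpComponent_mul_sub (h : Commute x y) (d : ℕ) :
    dexpComponent d x y * (x - y) = ((d + 1)! : ℚ)⁻¹ • (x - y) ^ (d + 1) := by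
  have hterm : ∀ n m : ℕ, (-y) ^ m * (∑ k ∈ range n, x ^ k * y ^ (n - 1 - k)) * (x - y) =
      x ^ n * (-y) ^ m - y ^ n * (-y) ^ m := by
    intro n m
    rw [mul_assoc, h.geom_sum₂_mul, mul_sub, (h.neg_right.pow_pow n m).eq,
      ((Commute.refl y).neg_right.pow_pow n m).eq]
  simp_rw [dexpComponent, sum_mul, smul_mul_assoc, hterm, smul_sub, sum_sub_distrib,
    h.neg_right.sum_antidiagonal_inv_factorial_smul,
    (Commute.refl y).neg_right.sum_antidiagonal_inv_factorial_smul, ← sub_eq_add_neg, sub_self,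
    zero_pow (Nat.succ_ne_zero d), smul_zero, sub_zero]

theorem map_dexpComponent {F : Type*} [Ring F] [Algebra ℚ F] (f : E →ₐ[ℚ] F) (d : ℕ) (x y : E) :
    f (dexpComponent d x y) = dexpComponent d (f x) (f y) := by
  simp [dexpComponent]

open Polynomial in
theorem dexpComponent_X_C_X (d : ℕ) :
    dexpComponent d (X : ℚ[X][X]) (C X) = ((d + 1)! : ℚ)⁻¹ • (X - C X) ^ d := by
  refine mul_right_cancel₀ (sub_ne_zero.mpr (X_ne_C X)) ?_
  rw [(Commute.all _ _).dexpComponent_mul_sub, smul_mul_assoc, ← pow_succ]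

theorem Commute.dexpComponent_eq (h : Commute x y) (d : ℕ) :
    dexpComponent d x y = ((d + 1)! : ℚ)⁻¹ • (x - y) ^ d := by
  let ev : Polynomial (Polynomial ℚ) →ₐ[ℚ] E := Polynomial.eval₂AlgHom (Polynomial.aeval y) x
    fun p => (Algebra.commute_of_mem_adjoin_singleton_of_commute
      (Polynomial.aeval_mem_adjoin_singleton ℚ y) h).symm
  have hX : ev Polynomial.X = x := by simp [ev]
  have hCX : ev (Polynomial.C Polynomial.X) = y := by simp [ev]
  simpa only [map_dexpComponent, map_smul, map_pow, map_sub, hX, hCX] using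
    congrArg ev (dexpComponent_X_C_X d)

theorem Commute.sum_sum_smul_neg_pow_mul_geom_sum₂ (h : Commute x y) {N : ℕ} (hx : x ^ N = 0)
    (hy : y ^ N = 0) :
    ∑ n ∈ range (2 * N + 1), ∑ m ∈ range (2 * N + 1), ((n ! : ℚ)⁻¹ * (m ! : ℚ)⁻¹) •
        ((-y) ^ m * ∑ k ∈ range n, x ^ k * y ^ (n - 1 - k)) =
      ∑ d ∈ range (2 * N + 1), ((d + 1)! : ℚ)⁻¹ • (x - y) ^ d := by
  have hsub : (x - y) ^ (2 * N) = 0 := by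
    rw [sub_eq_add_neg]
    exact h.neg_right.add_pow_eq_zero_of_add_le_succ_of_pow_eq_zero hx
      (by rw [neg_pow, hy, mul_zero]) (by omega)
  rw [sum_range_sum_range_eq_sum_range_sum_antidiagonal _
      fun n m hnm => by rw [h.neg_pow_mul_geom_sum₂_eq_zero hx hy (by omega), smul_zero],
    sum_range_succ', sum_range_succ _ (2 * N), hsub, smul_zero, add_zero]
  rw [Nat.antidiagonal_zero, sum_singleton, range_zero, sum_empty, mul_zero, smul_zero, add_zero]
  exact sum_congr rfl fun d _ => h.dexpComponent_eq d

end Commute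

theorem LinearMap.map_pow_of_leibniz {R A : Type*} [CommSemiring R] [Ring A] [Algebra R A]
    (D : A →ₗ[R] A) (hD : ∀ a b : A, D (a * b) = D a * b + a * D b) (U : A) (n : ℕ) :
    D (U ^ n) = (∑ k ∈ Finset.range n,
      LinearMap.mulLeft R U ^ k * LinearMap.mulRight R U ^ (n - 1 - k)) (D U) := by
  induction n with
  | zero =>
    simpa using hD 1 1
  | succ n ih =>
    simp only [Nat.add_sub_cancel]
    rw [(LinearMap.commute_mulLeft_right U U).geom_sum₂_succ_eq, pow_succ, hD, ih,
      LinearMap.add_apply, Module.End.mul_apply, LinearMap.mulRight_apply, LinearMap.pow_mulLeft,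
      LinearMap.mulLeft_apply, add_comm]

/-- Let `A` be an associative algebra over a field of characteristic
zero (we work over `ℚ`), `U ∈ A` nilpotent (`U ^ N = 0`), and `∂` a derivation of `A`.
Then `(∂ exp U) · exp(-U) = D(ad U)(∂U)` where `D(x) = (eˣ-1)/x`, i.e.
`∑_{n≥0} (ad U)ⁿ(∂U)/(n+1)!`; all series are the indicated finite sums (truncation at
`2N+1` is exact since `U ^ N = 0`). -/
theorem deriv_exp_mul_exp_neg
    {A : Type*} [Ring A] [Algebra ℚ A] (U : A) (N : ℕ) (hU : U ^ N = 0)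
    (D : A →ₗ[ℚ] A) (hD : ∀ a b : A, D (a * b) = D a * b + a * D b) :
    D (∑ n ∈ range (2 * N + 1), ((n.factorial : ℚ)⁻¹) • U ^ n) *
      (∑ n ∈ range (2 * N + 1), ((n.factorial : ℚ)⁻¹) • (-U) ^ n) =
    ∑ n ∈ range (2 * N + 1),
      (((n + 1).factorial : ℚ)⁻¹) • (fun a => U * a - a * U)^[n] (D U) := by
  set L := LinearMap.mulLeft ℚ U
  set R := LinearMap.mulRight ℚ U
  have hL : L ^ N = 0 := by rw [LinearMap.pow_mulLeft, hU, LinearMap.mulLeft_zero_eq_zero]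
  have hR : R ^ N = 0 := by rw [LinearMap.pow_mulRight, hU, LinearMap.mulRight_zero_eq_zero]
  have hnegR : ∀ m a, ((-R) ^ m) a = a * (-U) ^ m := fun m a => by
    rw [show -R = LinearMap.mulRight ℚ (-U) by ext; simp [R], LinearMap.pow_mulRight,
      LinearMap.mulRight_apply]
  have hterm : ∀ n m, D (U ^ n) * (-U) ^ m =
      ((-R) ^ m * ∑ k ∈ range n, L ^ k * R ^ (n - 1 - k)) (D U) := fun n m => by
    rw [Module.End.mul_apply, hnegR, D.map_pow_of_leibniz hD]
  have had : ∀ n, (fun a => U * a - a * U)^[n] (D U) = ((L - R) ^ n) (D U) := fun n => by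
    rw [Module.End.pow_apply]
    rfl
  calc _ = (∑ n ∈ range (2 * N + 1), ∑ m ∈ range (2 * N + 1), ((n ! : ℚ)⁻¹ * (m ! : ℚ)⁻¹) •
          ((-R) ^ m * ∑ k ∈ range n, L ^ k * R ^ (n - 1 - k))) (D U) := by
        simp only [map_sum, map_smul, sum_mul_sum, smul_mul_smul_comm, hterm,
          LinearMap.sum_apply, LinearMap.smul_apply]
    _ = (∑ d ∈ range (2 * N + 1), ((d + 1)! : ℚ)⁻¹ • (L - R) ^ d) (D U) := by
        rw [(LinearMap.commute_mulLeft_right U U).sum_sum_smul_neg_pow_mul_geom_sum₂ hL hR]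
    _ = _ := by simp only [LinearMap.sum_apply, LinearMap.smul_apply, had]
end

section
/- Let A be an associative algebra over a field of characteristic zero, U ∈ A nilpotent, and ∂ a derivation of A. Then exp(-U)·(∂ exp(U)) = D(-ad U)(∂U), where D(x) = (e^x-1)/x, i.e. exp(-U)·∂(exp U) = ∑_{n≥0} (-1)^n (ad U)^n(∂U)/(n+1)!. -/
/-! With `Q n = ∑_{i+j=n} C(n,i) (-U)^i D(U^j)`, Pascal's rule and the Leibniz rule give
`Q (n+1) = Q n * U - U * Q n + 0^n * D U`, so `Q (n+1) = (-ad U)^n (D U)`: this is the discrete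
form of `d/dt (e^{-tU} D e^{tU}) = e^{-tU} (D U) e^{tU}`. Since `exp (-U) * D (exp U)` is the
Cauchy product `∑ Q n / n!`, the theorem follows; nilpotency is needed only to truncate that
product. -/

open Finset

section Leibniz

variable {A : Type*} [Ring A] {D : A → A}

variable (D) in
/-- `n !` times the homogeneous part of degree `n` of `exp (-U) * D (exp U)`. -/
def expDerivTerm (U : A) (n : ℕ) : A :=
  ∑ ij ∈ antidiagonal n, n.choose ij.1 • ((-U) ^ ij.1 * D (U ^ ij.2))

theorem expDerivTerm_zero (hD : ∀ a b : A, D (a * b) = D a * b + a * D b) (U : A) :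
    expDerivTerm D U 0 = 0 := by
  have hD1 : D 1 = 0 := by simpa using hD 1 1
  simp [expDerivTerm, hD1]

theorem expDerivTerm_succ (hD : ∀ a b : A, D (a * b) = D a * b + a * D b) (U : A) (n : ℕ) :
    expDerivTerm D U (n + 1) =
      expDerivTerm D U n * U - U * expDerivTerm D U n + 0 ^ n * D U := by
  have hfirst : ∑ ij ∈ antidiagonal n, n.choose ij.1 • ((-U) ^ ij.1 * D (U ^ (ij.2 + 1))) =
      expDerivTerm D U n * U + 0 ^ n * D U := by
    rw [← neg_add_cancel U, (Commute.refl U).neg_left.add_pow', expDerivTerm, sum_mul, sum_mul,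
      ← sum_add_distrib]
    refine sum_congr rfl fun ij _ => ?_
    rw [pow_succ, hD, mul_add, smul_add, smul_mul_assoc, smul_mul_assoc, mul_assoc, mul_assoc]
  have hsecond : ∑ ij ∈ antidiagonal n, n.choose ij.2 • ((-U) ^ (ij.1 + 1) * D (U ^ ij.2)) =
      -(U * expDerivTerm D U n) := by
    rw [expDerivTerm, mul_sum, ← sum_neg_distrib]
    refine sum_congr rfl fun ij hij => ?_
    rw [← Nat.choose_symm_of_eq_add (mem_antidiagonal.1 hij).symm, pow_succ', neg_mul, neg_mul,
      mul_assoc, mul_smul_comm, smul_neg]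
  rw [expDerivTerm, sum_antidiagonal_choose_succ_nsmul (fun i j => (-U) ^ i * D (U ^ j)),
    hfirst, hsecond]
  abel

theorem expDerivTerm_succ_eq_iterate (hD : ∀ a b : A, D (a * b) = D a * b + a * D b)
    (U : A) (n : ℕ) :
    expDerivTerm D U (n + 1) = (-1 : ℤ) ^ n • (fun a => U * a - a * U)^[n] (D U) := by
  induction n with
  | zero => simp [expDerivTerm_succ hD, expDerivTerm_zero hD]
  | succ n ih =>
    rw [expDerivTerm_succ hD, ih, Function.iterate_succ_apply', zero_pow n.succ_ne_zero,
      zero_mul, add_zero, pow_succ, mul_neg_one, neg_smul, smul_sub, smul_mul_assoc,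
      mul_smul_comm]
    abel

theorem expDerivTerm_eq_zero_of_pow_eq_zero (hD : ∀ a b : A, D (a * b) = D a * b + a * D b)
    {U : A} {N n : ℕ} (hU : U ^ N = 0) (hn : 2 * N ≤ n + 1) : expDerivTerm D U n = 0 := by
  refine sum_eq_zero fun ij hij => ?_
  rcases le_or_gt N ij.1 with hi | hi
  · rw [neg_pow, pow_eq_zero_of_le hi hU, mul_zero, zero_mul, smul_zero]
  · have hD0 : D 0 = 0 := by simpa using hD 0 0
    rw [pow_eq_zero_of_le (by have := mem_antidiagonal.1 hij; omega) hU, hD0, mul_zero,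
      smul_zero]

end Leibniz

theorem sum_range_mul_sum_range_eq_sum_antidiagonal {R : Type*} [NonUnitalNonAssocSemiring R]
    {f g : ℕ → R} {N M : ℕ} (hf : ∀ k ≥ N, f k = 0) (hg : ∀ n ≥ N, g n = 0)
    (hM : 2 * N ≤ M + 1) :
    (∑ k ∈ range M, f k) * ∑ n ∈ range M, g n =
      ∑ s ∈ range M, ∑ p ∈ antidiagonal s, f p.1 * g p.2 := by
  simp only [Nat.sum_antidiagonal_eq_sum_range_succ (fun i j => f i * g j), Nat.succ_eq_add_one]
  rw [sum_range_diag_flip (f := fun i j => f i * g j), sum_mul]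
  simp_rw [← mul_sum]
  refine sum_congr rfl fun k hk => ?_
  rcases lt_or_ge k N with hkN | hkN
  · have := mem_range.1 hk
    rw [eventually_constant_sum hg (n := M) (by omega),
      eventually_constant_sum hg (n := M - k) (by omega)]
  · rw [hf k hkN, zero_mul, zero_mul]

theorem sum_antidiagonal_inv_factorial_smul_mul {A : Type*} [Ring A] [Algebra ℚ A]
    (x y : ℕ → A) (n : ℕ) :
    ∑ p ∈ antidiagonal n, ((p.1.factorial : ℚ)⁻¹ • x p.1) * ((p.2.factorial : ℚ)⁻¹ • y p.2) =
      (n.factorial : ℚ)⁻¹ • ∑ p ∈ antidiagonal n, n.choose p.1 • (x p.1 * y p.2) := by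
  rw [smul_sum]
  refine sum_congr rfl fun p hp => ?_
  obtain rfl := mem_antidiagonal.1 hp
  rw [smul_mul_smul_comm, ← Nat.cast_smul_eq_nsmul ℚ, smul_smul, Nat.cast_add_choose]
  congr 1
  field_simp

/-- Let `A` be an associative algebra over a field of characteristic
zero (we work over `ℚ`), `U ∈ A` nilpotent (`U ^ N = 0`), and `∂` a derivation of `A`.
Then `exp(-U) · (∂ exp U) = D(-ad U)(∂U)` where `D(x) = (eˣ-1)/x`, i.e.
`exp(-U) · ∂(exp U) = ∑_{n≥0} (-1)ⁿ (ad U)ⁿ(∂U)/(n+1)!` (finite sums by nilpotency). -/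
theorem exp_neg_mul_deriv_exp
    {A : Type*} [Ring A] [Algebra ℚ A] (U : A) (N : ℕ) (hU : U ^ N = 0)
    (D : A →ₗ[ℚ] A) (hD : ∀ a b : A, D (a * b) = D a * b + a * D b) :
    (∑ n ∈ range (2 * N + 1), ((n.factorial : ℚ)⁻¹) • (-U) ^ n) *
      D (∑ n ∈ range (2 * N + 1), ((n.factorial : ℚ)⁻¹) • U ^ n) =
    ∑ n ∈ range (2 * N + 1),
      (((-1 : ℚ) ^ n * ((n + 1).factorial : ℚ)⁻¹)) • (fun a => U * a - a * U)^[n] (D U) := by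
  have hM : 2 * N ≤ 2 * N + 1 + 1 := by omega
  have hneg_pow : ∀ k ≥ N, ((k.factorial : ℚ)⁻¹) • (-U) ^ k = 0 := fun k hk => by
    rw [neg_pow, pow_eq_zero_of_le hk hU, mul_zero, smul_zero]
  have hD_pow : ∀ k ≥ N, ((k.factorial : ℚ)⁻¹) • D (U ^ k) = 0 := fun k hk => by
    rw [pow_eq_zero_of_le hk hU, map_zero, smul_zero]
  calc _ = ∑ s ∈ range (2 * N + 1), ∑ p ∈ antidiagonal s,
        ((p.1.factorial : ℚ)⁻¹ • (-U) ^ p.1) * ((p.2.factorial : ℚ)⁻¹ • D (U ^ p.2)) := by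
        simp only [map_sum, map_smul]
        exact sum_range_mul_sum_range_eq_sum_antidiagonal hneg_pow hD_pow hM
    _ = ∑ s ∈ range (2 * N + 1), ((s.factorial : ℚ)⁻¹) • expDerivTerm D U s :=
        sum_congr rfl fun s _ =>
          sum_antidiagonal_inv_factorial_smul_mul (fun i => (-U) ^ i) (fun j => D (U ^ j)) s
    _ = ∑ s ∈ range (2 * N + 1), (((s + 1).factorial : ℚ)⁻¹) • expDerivTerm D U (s + 1) := by
        have h := (sum_range_succ _ _).symm.trans
          (sum_range_succ' (fun s => ((s.factorial : ℚ)⁻¹) • expDerivTerm D U s) (2 * N + 1))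
        rwa [expDerivTerm_zero hD, expDerivTerm_eq_zero_of_pow_eq_zero hD hU hM, smul_zero,
          smul_zero, add_zero, add_zero] at h
    _ = _ := by
        refine sum_congr rfl fun s _ => ?_
        rw [expDerivTerm_succ_eq_iterate hD, mul_comm, mul_smul, ← Int.cast_smul_eq_zsmul ℚ,
          Int.cast_pow, Int.cast_neg, Int.cast_one]
end

section
/- Let 𝔤 be a nilpotent Lie algebra over a field of characteristic zero. The BCH function β satisfies the associativity identity β(X, Y, Z) = β(β(X,Y), Z), where β(X,Y,Z) is defined by exp(X)exp(Y)exp(Z) = exp(β(X,Y,Z)). -/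
open Finset

noncomputable def texp {A : Type*} [Ring A] [Algebra ℚ A] (N : ℕ) (U : A) : A :=
  ∑ n ∈ range N, ((n.factorial : ℚ)⁻¹) • U ^ n

namespace BCHAux

variable {A : Type*} [Ring A] [Algebra ℚ A]

/-- The non-unital subalgebra generated by `S`. -/
def T (S : Submodule ℚ A) : Submodule ℚ A := ⨆ i : ℕ, S ^ (i + 1)

lemma le_T (S : Submodule ℚ A) : S ≤ T S :=
  le_iSup_of_le 0 (by simp)

lemma T_mul_T (S : Submodule ℚ A) : T S * T S ≤ T S := by
  rw [T, Submodule.iSup_mul]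
  refine iSup_le fun i => ?_
  rw [Submodule.mul_iSup]
  refine iSup_le fun j => ?_
  rw [← pow_add]
  exact le_iSup_of_le (i + j + 1) (le_of_eq (by rw [show i + 1 + (j + 1) = i + j + 1 + 1 by omega]))

lemma T_pow_succ_le (S : Submodule ℚ A) (k : ℕ) : T S ^ (k + 2) ≤ T S ^ (k + 1) := by
  rw [show k + 2 = k + 1 + 1 by rfl, pow_succ, pow_succ, mul_assoc]
  exact mul_le_mul' le_rfl (T_mul_T S)

lemma T_pow_le (S : Submodule ℚ A) (k d : ℕ) : T S ^ (k + 1 + d) ≤ T S ^ (k + 1) := by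
  induction d with
  | zero => exact le_rfl
  | succ d ih =>
    calc T S ^ (k + 1 + (d + 1)) = T S ^ (k + d + 2) := by ring_nf
    _ ≤ T S ^ (k + d + 1) := T_pow_succ_le S (k + d)
    _ = T S ^ (k + 1 + d) := by ring_nf
    _ ≤ T S ^ (k + 1) := ih

lemma T_pow_le' (S : Submodule ℚ A) {m k : ℕ} (h : k + 1 ≤ m) : T S ^ m ≤ T S ^ (k + 1) := by
  obtain ⟨d, rfl⟩ := Nat.exists_eq_add_of_le h
  exact T_pow_le S k d

lemma T_pow_bot (S : Submodule ℚ A) (N : ℕ) (hS : S ^ N = ⊥) : T S ^ N = ⊥ := by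
  have key : ∀ k, T S ^ k ≤ ⨆ i : ℕ, S ^ (i + k) := by
    intro k
    induction k with
    | zero => exact le_iSup_of_le 0 (by simp)
    | succ k ih =>
      calc T S ^ (k + 1) = T S ^ k * T S := pow_succ _ _
      _ ≤ (⨆ i : ℕ, S ^ (i + k)) * T S := mul_le_mul' ih le_rfl
      _ ≤ ⨆ i : ℕ, S ^ (i + (k + 1)) := by
          rw [Submodule.iSup_mul]
          refine iSup_le fun i => ?_
          rw [T, Submodule.mul_iSup]
          refine iSup_le fun j => ?_
          rw [← pow_add]
          exact le_iSup_of_le (i + j)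
            (le_of_eq (by rw [show i + k + (j + 1) = i + j + (k + 1) by omega]))
  have h2 : (⨆ i : ℕ, S ^ (i + N)) = ⊥ := by
    refine le_bot_iff.mp (iSup_le fun i => ?_)
    rw [show i + N = N + i by omega, pow_add, hS]; simp
  exact le_bot_iff.mp (h2 ▸ key N)

lemma sub_pow_mem (S : Submodule ℚ A) {U V : A} (hU : U ∈ T S) (hV : V ∈ T S) (k : ℕ)
    (hD : U - V ∈ T S ^ (k + 1)) :
    ∀ n, U ^ (n + 1) - V ^ (n + 1) ∈ T S ^ (n + k + 1) := by
  intro n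
  induction n with
  | zero => simpa using hD
  | succ n ih =>
    have hid : U ^ (n + 2) - V ^ (n + 2)
        = U ^ (n + 1) * (U - V) + (U ^ (n + 1) - V ^ (n + 1)) * V := by
      rw [show n + 2 = n + 1 + 1 by rfl, pow_succ, pow_succ]
      noncomm_ring
    rw [hid]
    refine Submodule.add_mem _ ?_ ?_
    · have := Submodule.mul_mem_mul (Submodule.pow_mem_pow _ hU (n + 1)) hD
      rw [← pow_add] at this
      rwa [show n + 1 + k + 1 = n + 1 + (k + 1) by omega]
    · have := Submodule.mul_mem_mul ih hV
      rw [← pow_succ] at this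
      rwa [show n + 1 + k + 1 = n + k + 1 + 1 by omega]

lemma texp_inj (S : Submodule ℚ A) (N : ℕ) (hS : S ^ N = ⊥) {U V : A}
    (hU : U ∈ S) (hV : V ∈ S) (h : texp N U = texp N V) : U = V := by
  match N, hS with
  | 0, hS =>
    have h1 : (1 : A) ∈ (⊥ : Submodule ℚ A) := by
      rw [← hS, pow_zero]; exact Submodule.one_le.mp le_rfl
    have h10 : (1 : A) = 0 := by simpa using h1
    calc U = U * 1 := by rw [mul_one]
    _ = V * 1 := by rw [h10, mul_zero, mul_zero]
    _ = V := by rw [mul_one]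
  | 1, hS =>
    rw [pow_one] at hS
    have hU0 : U = 0 := by have := hU; rw [hS] at this; simpa using this
    have hV0 : V = 0 := by have := hV; rw [hS] at this; simpa using this
    rw [hU0, hV0]
  | (M + 2), hS => ?_
  set N := M + 2 with hN
  have hTbot : T S ^ N = ⊥ := T_pow_bot S N hS
  have hUT : U ∈ T S := le_T S hU
  have hVT : V ∈ T S := le_T S hV
  have hsum : (∑ n ∈ range N, ((n.factorial : ℚ)⁻¹) • (U ^ n - V ^ n)) = 0 := by
    have h0 : texp N U - texp N V = 0 := by rw [h, sub_self]
    rw [texp, texp, ← Finset.sum_sub_distrib] at h0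
    simpa [smul_sub] using h0
  have key : ∀ k, U - V ∈ T S ^ (k + 1) := by
    intro k
    induction k with
    | zero => simpa using Submodule.sub_mem _ hUT hVT
    | succ k ih =>
      have hpow := sub_pow_mem S hUT hVT k ih
      rw [hN, Finset.sum_range_succ', Finset.sum_range_succ'] at hsum
      simp only [zero_add, pow_zero, sub_self, smul_zero, add_zero, pow_one,
        Nat.factorial_one, Nat.cast_one, inv_one, one_smul, Nat.factorial_zero] at hsum
      have hD : U - V = -∑ j ∈ range M,
          (((j + 1 + 1).factorial : ℚ)⁻¹) • (U ^ (j + 1 + 1) - V ^ (j + 1 + 1)) :=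
        eq_neg_of_add_eq_zero_right hsum
      rw [hD]
      refine Submodule.neg_mem _ (Submodule.sum_mem _ fun j _ => Submodule.smul_mem _ _ ?_)
      have := hpow (j + 1)
      exact T_pow_le' S (by omega) this
  have := key (M + 1)
  rw [show M + 1 + 1 = N by rfl, hTbot] at this
  exact sub_eq_zero.mp (by simpa using this)

end BCHAux

/-- Let `𝔤` be nilpotent over a field of characteristic zero; we model
this by elements of a submodule `S` of an associative `ℚ`-algebra with `S ^ N = ⊥`
(so all products of `N` elements of `S` vanish and all exponentials below are exact
finite sums).  The BCH function `β` satisfies the associativity identity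
`β(X,Y,Z) = β(β(X,Y),Z)`: if `exp X · exp Y = exp W` (so `W = β(X,Y)`),
`exp W · exp Z = exp W₂` (so `W₂ = β(β(X,Y),Z)`), and
`exp X · exp Y · exp Z = exp W₃` (so `W₃ = β(X,Y,Z)`), then `W₃ = W₂`. -/
theorem bch_associativity
    {A : Type*} [Ring A] [Algebra ℚ A] (S : Submodule ℚ A) (N : ℕ) (hS : S ^ N = ⊥)
    (X Y Z W W₂ W₃ : A)
    (hX : X ∈ S) (hY : Y ∈ S) (hZ : Z ∈ S) (hW : W ∈ S) (hW₂ : W₂ ∈ S) (hW₃ : W₃ ∈ S)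
    (h1 : texp N X * texp N Y = texp N W)
    (h2 : texp N W * texp N Z = texp N W₂)
    (h3 : texp N X * texp N Y * texp N Z = texp N W₃) :
    W₃ = W₂ := by
  apply BCHAux.texp_inj S N hS hW₃ hW₂
  rw [← h3, h1, h2]
end

section
/- Let the congruence a(uv)^{m-1} + b + c_x u^m + c_y v^m + d·uv - (1/2)a·d ≡ 0 hold in ℂ[u,v], where d = ∑_{0≤i≤m-2} d_i (uv)^i with constant coefficients d_i, and a, b are constants. Then reading off coefficients modulo (u^m, v^m) forces b = a d₀/2, d_i = a d_{i+1}/2 for i ≤ m-3, and d_{m-2} = -a, hence b = -a^m/2^{m-1}. -/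
open MvPolynomial Finset

noncomputable def sk (k : ℕ) : (Fin 2) →₀ ℕ := Finsupp.single 0 k + Finsupp.single 1 k

lemma sk_eq_sk {k n : ℕ} : sk k = sk n ↔ k = n := by
  constructor
  · intro h
    have := Finsupp.ext_iff.mp h 0
    simpa [sk] using this
  · rintro rfl; rfl

lemma sk_eq_zero {k : ℕ} : sk k = 0 ↔ k = 0 := by
  constructor
  · intro h
    have := Finsupp.ext_iff.mp h 0
    simpa [sk] using this
  · rintro rfl; simp [sk]

lemma coeff_pow_diag (k n : ℕ) :
    MvPolynomial.coeff (sk k) ((X 0 * X 1 : MvPolynomial (Fin 2) ℂ) ^ n)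
      = if k = n then 1 else 0 := by
  have : (X 0 * X 1 : MvPolynomial (Fin 2) ℂ) ^ n = monomial (sk n) 1 := by
    rw [mul_pow, X_pow_eq_monomial, X_pow_eq_monomial, monomial_mul, one_mul]
    rfl
  rw [this, coeff_monomial]
  simp [sk_eq_sk, eq_comm]

lemma coeff_cx (k m : ℕ) (hm' : 0 < m) (cx : Polynomial ℂ) :
    MvPolynomial.coeff (sk k)
      (Polynomial.aeval (X 0 : MvPolynomial (Fin 2) ℂ) cx * (X 0) ^ m) = 0 := by
  rw [Polynomial.aeval_eq_sum_range, Finset.sum_mul, coeff_sum]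
  refine Finset.sum_eq_zero fun i _ => ?_
  rw [smul_mul_assoc, ← pow_add, X_pow_eq_monomial, coeff_smul, coeff_monomial]
  have : ¬ (Finsupp.single (0:Fin 2) i + Finsupp.single (0:Fin 2) m = sk k) := by
    intro h
    have h0 := Finsupp.ext_iff.mp h 0
    have h1 := Finsupp.ext_iff.mp h 1
    simp [sk] at h0 h1
    omega
  simp [this]

lemma coeff_cy (k m : ℕ) (hm' : 0 < m) (cy : Polynomial ℂ) :
    MvPolynomial.coeff (sk k)
      (Polynomial.aeval (X 1 : MvPolynomial (Fin 2) ℂ) cy * (X 1) ^ m) = 0 := by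
  rw [Polynomial.aeval_eq_sum_range, Finset.sum_mul, coeff_sum]
  refine Finset.sum_eq_zero fun i _ => ?_
  rw [smul_mul_assoc, ← pow_add, X_pow_eq_monomial, coeff_smul, coeff_monomial]
  have : ¬ (Finsupp.single (1:Fin 2) i + Finsupp.single (1:Fin 2) m = sk k) := by
    intro h
    have h0 := Finsupp.ext_iff.mp h 0
    have h1 := Finsupp.ext_iff.mp h 1
    simp [sk] at h0 h1
    omega
  simp [this]

/-- Work in `ℂ[u,v]` (as `MvPolynomial (Fin 2) ℂ`, `u = X 0`,
`v = X 1`).  Suppose the identity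
`a(uv)^{m-1} + b + c_x(u)·uᵐ + c_y(v)·vᵐ + d·uv - (1/2)·a·d = 0`
holds, where `d = ∑_{0 ≤ i ≤ m-2} dᵢ (uv)ⁱ` with constant coefficients `dᵢ`, `a, b`
constants, `c_x ∈ ℂ[u]`, `c_y ∈ ℂ[v]` and `m ≥ 2` (the coefficient `-1/2` is the first
Bernoulli number `B₁`).  Then reading off coefficients modulo `(uᵐ, vᵐ)` forces
`b = a·d₀/2`, `dᵢ = a·d_{i+1}/2` for `i ≤ m-3`, and `d_{m-2} = -a`; hence
`b = -aᵐ/2^{m-1}`. -/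
theorem jacobi_bernoulli_cocycle_coefficients
    (m : ℕ) (hm : 2 ≤ m) (a b : ℂ) (d : ℕ → ℂ) (cx cy : Polynomial ℂ)
    (h : (C a) * (X 0 * X 1 : MvPolynomial (Fin 2) ℂ) ^ (m - 1) + C b
        + Polynomial.aeval (X 0 : MvPolynomial (Fin 2) ℂ) cx * (X 0) ^ m
        + Polynomial.aeval (X 1 : MvPolynomial (Fin 2) ℂ) cy * (X 1) ^ m
        + (∑ i ∈ range (m - 1), C (d i) * (X 0 * X 1) ^ i) * (X 0 * X 1)
        - C ((1 / 2 : ℂ) * a) * (∑ i ∈ range (m - 1), C (d i) * (X 0 * X 1) ^ i)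
        = 0) :
    b = a * d 0 / 2 ∧
    (∀ i : ℕ, i + 3 ≤ m → d i = a * d (i + 1) / 2) ∧
    d (m - 2) = -a ∧
    b = -(a ^ m / 2 ^ (m - 1)) := by
  have hm0 : 0 < m := by omega
  -- rewrite the sum-times-(uv) term
  have hsum : (∑ i ∈ range (m - 1), C (d i) * (X 0 * X 1 : MvPolynomial (Fin 2) ℂ) ^ i)
      * (X 0 * X 1)
      = ∑ i ∈ range (m - 1), C (d i) * (X 0 * X 1) ^ (i + 1) := by
    rw [Finset.sum_mul]
    exact Finset.sum_congr rfl fun i _ => by rw [mul_assoc, ← pow_succ]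
  rw [hsum] at h
  have key : ∀ k : ℕ,
      a * (if k = m - 1 then 1 else 0)
      + (if k = 0 then b else 0)
      + (∑ i ∈ range (m - 1), d i * (if k = i + 1 then (1:ℂ) else 0))
      - (1/2 * a) * (∑ i ∈ range (m - 1), d i * (if k = i then (1:ℂ) else 0)) = 0 := by
    intro k
    have := congrArg (MvPolynomial.coeff (sk k)) h
    simp only [coeff_add, coeff_sub, coeff_zero, coeff_C_mul, coeff_sum,
      coeff_pow_diag, coeff_cx k m hm0 cx, coeff_cy k m hm0 cy, coeff_C,
      sk_eq_zero] at this
    simp only [show ((0:Fin 2 →₀ ℕ) = sk k) ↔ k = 0 from eq_comm.trans sk_eq_zero] at this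
    simpa using this
  -- simplify the two sums
  have S2 : ∀ k : ℕ, k < m - 1 →
      (∑ i ∈ range (m - 1), d i * (if k = i then (1:ℂ) else 0)) = d k := by
    intro k hk
    rw [Finset.sum_eq_single k]
    · simp
    · intro i _ hi; simp [Ne.symm hi]
    · intro hk'; exact absurd (Finset.mem_range.mpr hk) hk'
  have S2' : (∑ i ∈ range (m - 1), d i * (if m - 1 = i then (1:ℂ) else 0)) = 0 := by
    refine Finset.sum_eq_zero fun i hi => ?_
    have : m - 1 ≠ i := by have := Finset.mem_range.mp hi; omega
    simp [this]
  have S1z : (∑ i ∈ range (m - 1), d i * (if 0 = i + 1 then (1:ℂ) else 0)) = 0 := by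
    refine Finset.sum_eq_zero fun i hi => ?_
    simp
  have S1 : ∀ j : ℕ, j < m - 1 →
      (∑ i ∈ range (m - 1), d i * (if j + 1 = i + 1 then (1:ℂ) else 0)) = d j := by
    intro j hj
    rw [Finset.sum_eq_single j]
    · simp
    · intro i _ hi
      have hne : ¬ j + 1 = i + 1 := by omega
      rw [if_neg hne, mul_zero]
    · intro hk'; exact absurd (Finset.mem_range.mpr hj) hk'
  -- equation at k = 0
  have e0 : b - 1/2 * a * d 0 = 0 := by
    have := key 0
    rw [S1z, S2 0 (by omega), if_pos rfl, if_neg (by omega)] at this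
    linear_combination this
  have hb : b = a * d 0 / 2 := by linear_combination e0
  -- equations at k = j+1, j ≤ m-3
  have emid : ∀ i : ℕ, i + 3 ≤ m → d i = a * d (i + 1) / 2 := by
    intro i hi
    have := key (i + 1)
    rw [S1 i (by omega), S2 (i + 1) (by omega), if_neg (by omega), if_neg (by omega)] at this
    linear_combination this
  -- equation at k = m-1
  have S1top : (∑ i ∈ range (m - 1), d i * (if m - 1 = i + 1 then (1:ℂ) else 0))
      = d (m - 2) := by
    rw [Finset.sum_eq_single (m - 2)]
    · rw [if_pos (by omega), mul_one]
    · intro i _ hi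
      have hne : ¬ m - 1 = i + 1 := by omega
      rw [if_neg hne, mul_zero]
    · intro hk'; exact absurd (Finset.mem_range.mpr (by omega)) hk'
  have etop : d (m - 2) = -a := by
    have := key (m - 1)
    rw [S2', S1top, if_pos rfl, if_neg (by omega)] at this
    linear_combination this
  refine ⟨hb, emid, etop, ?_⟩
  -- downward induction
  have main : ∀ j : ℕ, j ≤ m - 2 → d (m - 2 - j) = -(a ^ (j + 1) / 2 ^ j) := by
    intro j
    induction j with
    | zero => intro _; simpa using etop
    | succ j ih =>
      intro hj
      have h1 : (m - 2 - (j+1)) + 3 ≤ m := by omega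
      have h2 : (m - 2 - (j+1)) + 1 = m - 2 - j := by omega
      have := emid _ h1
      rw [h2, ih (by omega)] at this
      rw [this]
      field_simp
      ring
  have hd0 : d 0 = -(a ^ (m - 1) / 2 ^ (m - 2)) := by
    have := main (m - 2) (le_refl _)
    rw [show m - 2 + 1 = m - 1 from by omega] at this
    simpa using this
  obtain ⟨n, rfl⟩ : ∃ n, m = n + 2 := ⟨m - 2, by omega⟩
  rw [hb, hd0]
  have e1 : n + 2 - 1 = n + 1 := rfl
  have e2 : n + 2 - 2 = n := rfl
  rw [e1, e2]
  field_simp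
  ring
end
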